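/- arXiv:1611.06268 — 4 statements merged into one kernel-verified Lean document; each statement's English description precedes it below -/
import Mathlib

section
/- Let κ be an infinite cardinal. If X is a Hausdorff initially κ-compact topological space with a G_κ-diagonal, then the weight of X is at most κ. -/
open Set Cardinal

universe u

/-- The star of a family `𝒪` of subsets about a set `A`:
`st(A, 𝒪) = ⋃ {O ∈ 𝒪 : O ∩ A ≠ ∅}`. -/
def SetStar {X : Type u} (A : Set X) (𝒪 : Set (Set X)) : Set X :=
  ⋃₀ {O | O ∈ 𝒪 ∧ (O ∩ A).Nonempty}

/-- `X` is initially `κ`-compact: every open cover of cardinality at most `κ`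
has a finite subcover. -/
def InitiallyCompact (X : Type u) [TopologicalSpace X] (κ : Cardinal.{u}) : Prop :=
  ∀ 𝒞 : Set (Set X), (∀ U ∈ 𝒞, IsOpen U) → ⋃₀ 𝒞 = Set.univ → #𝒞 ≤ κ →
    ∃ F ⊆ 𝒞, F.Finite ∧ ⋃₀ F = Set.univ

/-- `{𝒪_α : α < κ}` is a quasi-`G_κ`-diagonal sequence for `X`: each `𝒪_α` is a
collection of open subsets of `X`, and for all distinct `x, y ∈ X` there is `α < κ`
with `x ∈ ⋃ 𝒪_α` and `y ∉ st(x, 𝒪_α)`. -/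
def IsQuasiGDiagonalSeq {X : Type u} [TopologicalSpace X] (κ : Cardinal.{u})
    (𝒪 : κ.ord.ToType → Set (Set X)) : Prop :=
  (∀ α, ∀ O ∈ 𝒪 α, IsOpen O) ∧
    ∀ x y : X, x ≠ y → ∃ α, x ∈ ⋃₀ 𝒪 α ∧ y ∉ SetStar {x} (𝒪 α)

/-- The weight of `X`: the smallest cardinality of a base for the topology. -/
noncomputable def weight (X : Type u) [TopologicalSpace X] : Cardinal.{u} :=
  sInf {c | ∃ B : Set (Set X), TopologicalSpace.IsTopologicalBasis B ∧ #B = c}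

/-!
Write the diagonal as `⋂ i, W i` with at most `κ` open sets `W i`, and let `W i[x]` be the
section `{y | (x, y) ∈ W i}`.

First, `X` is compact. Given closed sets `𝒵` with the finite intersection property, Zorn's lemma
yields a maximal set `M` of pairs `(x, i)`, no two of which have each centre in the other's ball,
and whose ball complements `W i[x]ᶜ` keep the finite intersection property together with `𝒵`.
For fixed `i` the centres form a closed discrete set, finite by initial `κ`-compactness, so
`#M ≤ κ` and the closed sets `W i[x]ᶜ` have a common point `x₀`. By maximality every ball
`W i[x₀]` contains a finite intersection from `𝒵` and these complements; as `⋂ i, W i[x₀] = {x₀}`,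
initial `κ`-compactness puts `x₀` in every member of `𝒵`.

Second, in the compact Hausdorff space `X` the compact set `(W i)ᶜ` is covered by finitely many
boxes `V × V'` with `V`, `V'` disjoint. The at most `κ` sets obtained this way separate points, so
they generate a Hausdorff topology coarser than the compact one, hence equal to it, and their
finite intersections form a base of cardinality at most `κ`.
-/

open Filter Topology TopologicalSpace

section InitiallyCompact

variable {X : Type u} [TopologicalSpace X] {κ : Cardinal.{u}}

theorem InitiallyCompact.sInter_nonempty (hX : InitiallyCompact X κ) {𝓕 : Filter X} [𝓕.NeBot]
    {𝒞 : Set (Set X)} (hclosed : ∀ C ∈ 𝒞, IsClosed C) (hmem : ∀ C ∈ 𝒞, C ∈ 𝓕)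
    (hcard : #𝒞 ≤ κ) : (⋂₀ 𝒞).Nonempty := by
  by_contra hempty
  have hcover : ⋃₀ (compl '' 𝒞) = Set.univ := by
    rw [← compl_sInter, not_nonempty_iff_eq_empty.1 hempty, compl_empty]
  obtain ⟨F, hF𝒞, hFfin, hFcover⟩ := hX (compl '' 𝒞)
    (by rintro _ ⟨C, hC, rfl⟩; exact (hclosed C hC).isOpen_compl) hcover (mk_image_le.trans hcard)
  have hmemF : ⋂₀ (compl '' F) ∈ 𝓕 := by
    refine (sInter_mem (hFfin.image _)).2 ?_
    rintro _ ⟨U, hU, rfl⟩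
    obtain ⟨C, hC, rfl⟩ := hF𝒞 hU
    simpa using hmem C hC
  rw [← compl_sUnion, hFcover, compl_univ] at hmemF
  exact empty_notMem 𝓕 hmemF

variable [T1Space X] {W : Set (X × X)}

theorem InitiallyCompact.finite_of_pairwise_of_mk_le (hκ : ℵ₀ ≤ κ) (hX : InitiallyCompact X κ)
    (hWo : IsOpen W) (hWd : ∀ x, (x, x) ∈ W) {D : Set X}
    (hD : D.Pairwise fun x y => (x, y) ∉ W ∨ (y, x) ∉ W) (hcard : #D ≤ κ) : D.Finite := by
  choose V hVo hxV hVW using fun x => exists_nhds_square (hWo.mem_nhds (hWd x))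
  have hVD : ∀ x, (V x ∩ D).Subsingleton := by
    rintro x a ⟨haV, haD⟩ b ⟨hbV, hbD⟩
    by_contra hab
    rcases hD haD hbD hab with h | h
    exacts [h (hVW x ⟨haV, hbV⟩), h (hVW x ⟨hbV, haV⟩)]
  have hDclosed : IsClosed D := by
    refine isClosed_of_closure_subset fun x hx => ?_
    have hxD := (hVo x).inter_closure ⟨hxV x, hx⟩
    rw [(hVD x).isClosed.closure_eq] at hxD
    exact hxD.2
  have hopen : ∀ U ∈ insert Dᶜ (V '' D), IsOpen U := by
    rintro U (rfl | ⟨x, -, rfl⟩)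
    exacts [hDclosed.isOpen_compl, hVo x]
  have hcover : ⋃₀ insert Dᶜ (V '' D) = Set.univ := by
    refine eq_univ_of_forall fun x => ?_
    by_cases hx : x ∈ D
    exacts [⟨V x, mem_insert_of_mem _ ⟨x, hx, rfl⟩, hxV x⟩, ⟨Dᶜ, mem_insert _ _, hx⟩]
  have hcard' : #↥(insert Dᶜ (V '' D)) ≤ κ :=
    calc #↥(insert Dᶜ (V '' D)) ≤ #(V '' D) + 1 := mk_insert_le
      _ ≤ κ + 1 := add_le_add_left (mk_image_le.trans hcard) 1
      _ = κ := add_one_eq hκ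
  obtain ⟨F, hF, hFfin, hFcover⟩ := hX _ hopen hcover hcard'
  refine Set.Finite.of_finite_image (f := V) (hFfin.subset ?_)
    fun a ha b hb (hab : V a = V b) => hVD b ⟨hab ▸ hxV a, ha⟩ ⟨hxV b, hb⟩
  rintro _ ⟨a, ha, rfl⟩
  obtain ⟨U, hUF, haU⟩ : a ∈ ⋃₀ F := hFcover ▸ Set.mem_univ a
  rcases hF hUF with rfl | ⟨b, hb, rfl⟩
  · exact absurd ha haU
  · rwa [hVD b ⟨haU, ha⟩ ⟨hxV b, hb⟩]

theorem InitiallyCompact.finite_of_pairwise (hκ : ℵ₀ ≤ κ) (hX : InitiallyCompact X κ)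
    (hWo : IsOpen W) (hWd : ∀ x, (x, x) ∈ W) {D : Set X}
    (hD : D.Pairwise fun x y => (x, y) ∉ W ∨ (y, x) ∉ W) : D.Finite := by
  by_contra hinf
  obtain ⟨D', hD'D, hD'card⟩ :=
    le_mk_iff_exists_subset.1 (infinite_iff.1 (Set.Infinite.to_subtype hinf))
  have hfin := hX.finite_of_pairwise_of_mk_le hκ hWo hWd (hD.mono hD'D) (hD'card.trans_le hκ)
  exact hfin.lt_aleph0.ne hD'card

end InitiallyCompact

theorem compactSpace_of_forall_sInter_nonempty {X : Type u} [TopologicalSpace X]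
    (h : ∀ 𝒵 : Set (Set X), (∀ Z ∈ 𝒵, IsClosed Z) → (generate 𝒵).NeBot → (⋂₀ 𝒵).Nonempty) :
    CompactSpace X := by
  refine ⟨fun 𝓕 _ _ => ?_⟩
  have hle : 𝓕 ≤ generate (closure '' 𝓕.sets) := by
    rw [le_generate_iff]
    rintro _ ⟨s, hs, rfl⟩
    exact mem_of_superset hs subset_closure
  obtain ⟨x, hx⟩ := h (closure '' 𝓕.sets) (by rintro _ ⟨s, -, rfl⟩; exact isClosed_closure)
    (NeBot.mono ‹_› hle)
  exact ⟨x, Set.mem_univ x, clusterPt_iff_forall_mem_closure.2 fun s hs => hx _ ⟨s, hs, rfl⟩⟩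

theorem exists_isClosed_mem_generate_subset {X : Type u} [TopologicalSpace X]
    {𝒞 : Set (Set X)} (h𝒞 : ∀ C ∈ 𝒞, IsClosed C) {s : Set X} (hs : s ∈ generate 𝒞) :
    ∃ C, IsClosed C ∧ C ∈ generate 𝒞 ∧ C ⊆ s := by
  obtain ⟨t, ht𝒞, htfin, hts⟩ := mem_generate_iff.1 hs
  exact ⟨⋂₀ t, isClosed_sInter fun C hC => h𝒞 C (ht𝒞 hC),
    (sInter_mem htfin).2 fun C hC => mem_generate_of_mem (ht𝒞 hC), hts⟩

section Admissible

variable {X : Type u} {ι : Type u} (W : ι → Set (X × X))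

def farFrom (p : X × ι) : Set X := {y | (p.1, y) ∉ W p.2}

def IsAdmissible (𝒵 : Set (Set X)) (A : Set (X × ι)) : Prop :=
  A.Pairwise (fun p q => p.1 ∈ farFrom W q ∨ q.1 ∈ farFrom W p) ∧
    (generate (𝒵 ∪ farFrom W '' A)).NeBot

variable {W}

theorem isClosed_farFrom [TopologicalSpace X] (hWo : ∀ i, IsOpen (W i)) (p : X × ι) :
    IsClosed (farFrom W p) :=
  ((hWo p.2).preimage (Continuous.prodMk_right p.1)).isClosed_compl

theorem IsAdmissible.sUnion {𝒵 : Set (Set X)} {c : Set (Set (X × ι))}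
    (hc : IsChain (· ⊆ ·) c) (hne : c.Nonempty) (h : ∀ A ∈ c, IsAdmissible W 𝒵 A) :
    IsAdmissible W 𝒵 (⋃₀ c) := by
  refine ⟨(pairwise_sUnion hc.directedOn).2 fun A hA => (h A hA).1,
    generate_neBot_iff.2 fun t ht htfin => ?_⟩
  have hdir : DirectedOn (· ⊆ ·) ((fun A => 𝒵 ∪ farFrom W '' A) '' c) :=
    hc.directedOn.mono_comp fun A B hAB => union_subset_union_right _ (image_mono hAB)
  have htc : t ⊆ ⋃₀ ((fun A => 𝒵 ∪ farFrom W '' A) '' c) := by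
    intro s hs
    obtain ⟨A, hA⟩ := hne
    rcases ht hs with hs𝒵 | ⟨p, ⟨B, hB, hpB⟩, rfl⟩
    exacts [⟨_, ⟨A, hA, rfl⟩, Or.inl hs𝒵⟩, ⟨_, ⟨B, hB, rfl⟩, Or.inr ⟨p, hpB, rfl⟩⟩]
  obtain ⟨_, ⟨A, hA, rfl⟩, htA⟩ :=
    hdir.exists_mem_subset_of_finite_of_subset_sUnion (hne.image _) htfin htc
  exact generate_neBot_iff.1 (h A hA).2 t htA htfin

theorem mk_le_of_pairwise_farFrom [TopologicalSpace X] [T1Space X] {κ : Cardinal.{u}}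
    (hκ : ℵ₀ ≤ κ) (hX : InitiallyCompact X κ) (hι : #ι ≤ κ) (hWo : ∀ i, IsOpen (W i))
    (hWd : ∀ i x, (x, x) ∈ W i) {M : Set (X × ι)}
    (hM : M.Pairwise fun p q => p.1 ∈ farFrom W q ∨ q.1 ∈ farFrom W p) : #M ≤ κ := by
  have hfiber : ∀ i, {x | (x, i) ∈ M}.Finite := fun i =>
    hX.finite_of_pairwise hκ (hWo i) (hWd i) fun x hx y hy hxy =>
      (hM hx hy fun h => hxy (congrArg Prod.fst h)).symm
  have hcover : M ⊆ ⋃ i, (·, i) '' {x | (x, i) ∈ M} := fun p hp =>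
    mem_iUnion.2 ⟨p.2, p.1, hp, rfl⟩
  calc #M ≤ #(⋃ i, (·, i) '' {x | (x, i) ∈ M}) := mk_le_mk_of_subset hcover
    _ ≤ #ι * ⨆ i, #((·, i) '' {x | (x, i) ∈ M}) := mk_iUnion_le _
    _ ≤ κ * ℵ₀ := mul_le_mul' hι (ciSup_le' fun i => ((hfiber i).image _).lt_aleph0.le)
    _ = κ := mul_aleph0_eq hκ

theorem sInter_nonempty_of_maximal_isAdmissible [TopologicalSpace X] {κ : Cardinal.{u}}
    (hκ : ℵ₀ ≤ κ) (hX : InitiallyCompact X κ) (hι : #ι ≤ κ) (hWo : ∀ i, IsOpen (W i))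
    (hWd : ∀ i x, (x, x) ∈ W i) (hsep : ∀ x y, (∀ i, (x, y) ∈ W i) → x = y)
    {𝒵 : Set (Set X)} (h𝒵 : ∀ Z ∈ 𝒵, IsClosed Z) {M : Set (X × ι)}
    (hM : Maximal (IsAdmissible W 𝒵) M) (hcard : #M ≤ κ) : (⋂₀ 𝒵).Nonempty := by
  set 𝓖 := generate (𝒵 ∪ farFrom W '' M)
  have : 𝓖.NeBot := hM.prop.2
  have hclosed : ∀ C ∈ 𝒵 ∪ farFrom W '' M, IsClosed C := by
    rintro C (hC | ⟨p, -, rfl⟩)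
    exacts [h𝒵 C hC, isClosed_farFrom hWo p]
  obtain ⟨x, hx⟩ := hX.sInter_nonempty (𝓕 := 𝓖) (fun C hC => hclosed C (Or.inr hC))
    (fun C hC => mem_generate_of_mem (Or.inr hC)) (mk_image_le.trans hcard)
  -- otherwise `(x, i)` could be added to `M`
  have hball : ∀ i, (farFrom W (x, i))ᶜ ∈ 𝓖 := by
    intro i
    by_contra hnot
    have hext : IsAdmissible W 𝒵 (insert (x, i) M) := by
      refine ⟨pairwise_insert.2 ⟨hM.prop.1, fun q hq _ =>
        ⟨Or.inl (hx _ ⟨q, hq, rfl⟩), Or.inr (hx _ ⟨q, hq, rfl⟩)⟩⟩, ?_⟩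
      rw [image_insert_eq, union_insert, insert_eq, generate_union, generate_singleton, inf_comm]
      exact ⟨by rwa [Ne, inf_principal_eq_bot]⟩
    exact hx _ ⟨_, hM.mem_of_prop_insert hext, rfl⟩ (hWd i x)
  choose C hCclosed hC𝓖 hCball using fun i =>
    exists_isClosed_mem_generate_subset hclosed (hball i)
  refine ⟨x, fun Z hZ => ?_⟩
  have hcardZ : #↥(insert Z (range C)) ≤ κ :=
    calc #↥(insert Z (range C)) ≤ #(range C) + 1 := mk_insert_le
      _ ≤ κ + 1 := add_le_add_left (mk_range_le.trans hι) 1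
      _ = κ := add_one_eq hκ
  obtain ⟨y, hy⟩ := hX.sInter_nonempty (𝓕 := 𝓖) (𝒞 := insert Z (range C))
    (by rintro _ (rfl | ⟨i, rfl⟩); exacts [h𝒵 _ hZ, hCclosed i])
    (by rintro _ (rfl | ⟨i, rfl⟩); exacts [mem_generate_of_mem (Or.inl hZ), hC𝓖 i]) hcardZ
  have hxy : x = y := hsep x y fun i =>
    not_not.1 (hCball i (hy _ (mem_insert_of_mem _ ⟨i, rfl⟩)))
  exact hxy ▸ hy Z (mem_insert _ _)

theorem compactSpace_of_initiallyCompact [TopologicalSpace X] [T1Space X] {κ : Cardinal.{u}}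
    (hκ : ℵ₀ ≤ κ) (hX : InitiallyCompact X κ) (hι : #ι ≤ κ) (hWo : ∀ i, IsOpen (W i))
    (hW : ⋂ i, W i = diagonal X) : CompactSpace X := by
  have hWd : ∀ i x, (x, x) ∈ W i := fun i x =>
    iInter_subset W i (hW.symm ▸ mem_diagonal x)
  have hsep : ∀ x y, (∀ i, (x, y) ∈ W i) → x = y := fun x y h =>
    (hW ▸ mem_iInter.2 h : (x, y) ∈ diagonal X)
  refine compactSpace_of_forall_sInter_nonempty fun 𝒵 h𝒵 hne => ?_
  obtain ⟨M, -, hM⟩ := zorn_subset_nonempty {A | IsAdmissible W 𝒵 A}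
    (fun c hc hchain hcne => ⟨⋃₀ c, .sUnion hchain hcne hc, fun _ => subset_sUnion_of_mem⟩) ∅
    ⟨pairwise_empty _, by simpa using hne⟩
  exact sInter_nonempty_of_maximal_isAdmissible hκ hX hι hWo hWd hsep h𝒵 hM
    (mk_le_of_pairwise_farFrom hκ hX hι hWo hWd hM.prop.1)

end Admissible

theorem mk_finite_subsets_le {α : Type u} (s : Set α) :
    #{t : Set α | t.Finite ∧ t ⊆ s} ≤ max ℵ₀ #s := by
  classical
  have hrange : {t : Set α | t.Finite ∧ t ⊆ s} ⊆
      range fun u : Finset s => Subtype.val '' (u : Set s) := by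
    rintro t ⟨ht, hts⟩
    lift t to Set s using hts
    lift t to Finset s using ht.of_finite_image Subtype.val_injective.injOn
    exact mem_range_self _
  calc #{t : Set α | t.Finite ∧ t ⊆ s} ≤ #(Finset s) :=
        (mk_le_mk_of_subset hrange).trans mk_range_le
    _ ≤ #(List s) := mk_le_of_surjective List.toFinset_surjective
    _ ≤ max ℵ₀ #s := mk_list_le_max _

section Weight

variable {X : Type u} [t : TopologicalSpace X]

theorem weight_le_mk_of_isTopologicalBasis {B : Set (Set X)} (hB : IsTopologicalBasis B) :
    weight X ≤ #B :=
  csInf_le' ⟨B, hB, rfl⟩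

theorem weight_le_of_eq_generateFrom {κ : Cardinal.{u}} (hκ : ℵ₀ ≤ κ) {ℬ : Set (Set X)}
    (hgen : t = generateFrom ℬ) (hcard : #ℬ ≤ κ) : weight X ≤ κ :=
  (weight_le_mk_of_isTopologicalBasis (isTopologicalBasis_of_subbasis hgen)).trans <|
    mk_image_le.trans <| (mk_finite_subsets_le ℬ).trans (max_le hκ hcard)

theorem eq_generateFrom_of_compactSpace [CompactSpace X] {ℬ : Set (Set X)}
    (hopen : ∀ b ∈ ℬ, IsOpen b)
    (hsep : ∀ x y, x ≠ y → ∃ U ∈ ℬ, ∃ V ∈ ℬ, x ∈ U ∧ y ∈ V ∧ Disjoint U V) :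
    t = generateFrom ℬ := by
  have hT2 : @T2Space X (generateFrom ℬ) := @T2Space.mk X (generateFrom ℬ) fun x y hxy => by
    obtain ⟨U, hU, V, hV, hxU, hyV, hUV⟩ := hsep x y hxy
    exact ⟨U, V, isOpen_generateFrom_of_mem hU, isOpen_generateFrom_of_mem hV, hxU, hyV, hUV⟩
  have hle : t ≤ generateFrom ℬ := le_generateFrom hopen
  have hclosed := @Continuous.isClosedMap X X t (generateFrom ℬ) _ hT2 id
    (continuous_id_iff_le.2 hle)
  refine le_antisymm hle fun s hs => ?_
  have hsc := hclosed sᶜ (@IsOpen.isClosed_compl X t s hs)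
  rw [image_id] at hsc
  simpa using @IsClosed.isOpen_compl X (generateFrom ℬ) sᶜ hsc

theorem exists_finite_separating_of_isOpen [CompactSpace X] [T2Space X] {U : Set (X × X)}
    (hU : IsOpen U) (hdiag : diagonal X ⊆ U) :
    ∃ ℬ : Set (Set X), ℬ.Finite ∧ (∀ b ∈ ℬ, IsOpen b) ∧
      ∀ x y, (x, y) ∉ U → ∃ V ∈ ℬ, ∃ V' ∈ ℬ, x ∈ V ∧ y ∈ V' ∧ Disjoint V V' := by
  have hbox : ∀ z : X × X, ∃ V V' : Set X, IsOpen V ∧ IsOpen V' ∧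
      (z ∉ U → z.1 ∈ V ∧ z.2 ∈ V' ∧ Disjoint V V') := by
    intro z
    by_cases hz : z ∈ U
    · exact ⟨univ, univ, isOpen_univ, isOpen_univ, absurd hz⟩
    · obtain ⟨V, V', hV, hV', h⟩ := t2_separation fun h => hz (hdiag h)
      exact ⟨V, V', hV, hV', fun _ => h⟩
  choose V V' hV hV' hsep using hbox
  obtain ⟨s, hsU, hcover⟩ := hU.isClosed_compl.isCompact.elim_nhds_subcover
    (fun z => V z ×ˢ V' z) fun z hz => prod_mem_nhds ((hV z).mem_nhds (hsep z hz).1)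
      ((hV' z).mem_nhds (hsep z hz).2.1)
  refine ⟨V '' s ∪ V' '' s, (s.finite_toSet.image _).union (s.finite_toSet.image _), ?_, ?_⟩
  · rintro _ (⟨z, -, rfl⟩ | ⟨z, -, rfl⟩)
    exacts [hV z, hV' z]
  · intro x y hxy
    obtain ⟨z, hz, hxyz⟩ := mem_iUnion₂.1 (hcover hxy)
    exact ⟨V z, Or.inl ⟨z, hz, rfl⟩, V' z, Or.inr ⟨z, hz, rfl⟩, hxyz.1, hxyz.2,
      (hsep z (hsU z hz)).2.2⟩

theorem weight_le_of_compactSpace [CompactSpace X] [T2Space X] {κ : Cardinal.{u}} (hκ : ℵ₀ ≤ κ)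
    {ι : Type u} (hι : #ι ≤ κ) {W : ι → Set (X × X)} (hWo : ∀ i, IsOpen (W i))
    (hW : ⋂ i, W i = diagonal X) : weight X ≤ κ := by
  choose ℬ hfin hopen hsep using fun i =>
    exists_finite_separating_of_isOpen (hWo i) (hW ▸ iInter_subset W i)
  refine weight_le_of_eq_generateFrom hκ (ℬ := ⋃ i, ℬ i) ?_ ?_
  · refine eq_generateFrom_of_compactSpace (fun b hb => ?_) fun x y hxy => ?_
    · obtain ⟨i, hi⟩ := mem_iUnion.1 hb
      exact hopen i b hi
    · obtain ⟨i, hi⟩ : ∃ i, (x, y) ∉ W i := by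
        by_contra! h
        exact hxy (hW ▸ mem_iInter.2 h : (x, y) ∈ diagonal X)
      obtain ⟨V, hV, V', hV', h⟩ := hsep i x y hi
      exact ⟨V, mem_iUnion_of_mem i hV, V', mem_iUnion_of_mem i hV', h⟩
  · calc #(⋃ i, ℬ i) ≤ #ι * ⨆ i, #(ℬ i) := mk_iUnion_le _
      _ ≤ κ * ℵ₀ := mul_le_mul' hι (ciSup_le' fun i => (hfin i).lt_aleph0.le)
      _ = κ := mul_aleph0_eq hκ

end Weight

/-- A Hausdorff initially `κ`-compact space with a `G_κ`-diagonal has weight at most `κ`. -/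
theorem weight_le_of_initiallyCompact_GDiagonal {X : Type u} [TopologicalSpace X] [T2Space X]
    (κ : Cardinal.{u}) (hκ : ℵ₀ ≤ κ) (hX : InitiallyCompact X κ)
    (hdiag : ∃ 𝒰 : Set (Set (X × X)), (∀ U ∈ 𝒰, IsOpen U) ∧ #𝒰 ≤ κ ∧
      ⋂₀ 𝒰 = Set.diagonal X) :
    weight X ≤ κ := by
  obtain ⟨𝒰, hopen, hcard, hdiag⟩ := hdiag
  have hopen' : ∀ U : 𝒰, IsOpen (U : Set (X × X)) := fun U => hopen U U.2
  rw [sInter_eq_iInter] at hdiag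
  have : CompactSpace X := compactSpace_of_initiallyCompact hκ hX hcard hopen' hdiag
  exact weight_le_of_compactSpace hκ hcard hopen' hdiag
end

section
/- Let κ be an infinite cardinal, let X be an initially κ-compact topological space, let {𝒪_α : α < κ} be a quasi-G_κ-diagonal sequence for X, and let ℳ be an open cover of X with no finite subcover that is maximal, i.e., for every open subset O of X with O ∉ ℳ the cover ℳ ∪ {O} has a finite subcover. Then for every x ∈ X there exists α < κ such that x ∈ ⋃𝒪_α and st(x, 𝒪_α) ∈ ℳ. -/
open Set Cardinal

universe u

/-! An open cover `ℳ` that is maximal without a finite subcover contains, for each `x`, some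
star `st(x, 𝒪_α)`. Otherwise, each such star being open and outside `ℳ`, maximality gives a
finite `G_α ⊆ ℳ` covering its complement. By the diagonal property the `G_α`, together with
one member of `ℳ` containing `x`, cover `X`; this is a subcover of `ℳ` of size at most `κ`,
so initial `κ`-compactness yields a finite subcover of `ℳ`, a contradiction. -/

theorem isOpen_setStar {X : Type u} [TopologicalSpace X] (A : Set X) {𝒪 : Set (Set X)}
    (h𝒪 : ∀ O ∈ 𝒪, IsOpen O) : IsOpen (SetStar A 𝒪) :=
  isOpen_sUnion fun O hO => h𝒪 O hO.1

theorem Cardinal.mk_insert_iUnion_finite_le {α ι : Type u} {κ : Cardinal.{u}} (hκ : ℵ₀ ≤ κ)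
    (hι : #ι ≤ κ) (a : α) {G : ι → Set α} (hG : ∀ i, (G i).Finite) :
    #(insert a (⋃ i, G i) : Set α) ≤ κ :=
  calc #(insert a (⋃ i, G i) : Set α)
      ≤ #(⋃ i, G i) + 1 := mk_insert_le
    _ ≤ (#ι * ⨆ i, #(G i)) + 1 := add_le_add_left (mk_iUnion_le G) 1
    _ ≤ κ * ℵ₀ + 1 :=
        add_le_add_left (mul_le_mul' hι (ciSup_le' fun i => (hG i).lt_aleph0.le)) 1
    _ = κ := by rw [mul_aleph0_eq hκ, add_one_eq hκ]

theorem exists_finite_subset_compl_subset_sUnion_of_subset_insert {X : Type u}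
    {ℳ F : Set (Set X)} {O : Set X} (hF : F ⊆ insert O ℳ) (hFfin : F.Finite)
    (hFcov : ⋃₀ F = Set.univ) : ∃ G ⊆ ℳ, G.Finite ∧ Oᶜ ⊆ ⋃₀ G := by
  refine ⟨F \ {O}, fun M hM => (hF hM.1).resolve_left hM.2, hFfin.sdiff, fun y hy => ?_⟩
  obtain ⟨M, hMF, hyM⟩ : y ∈ ⋃₀ F := hFcov ▸ mem_univ y
  exact ⟨M, ⟨hMF, fun hMO => hy (hMO ▸ hyM)⟩, hyM⟩

theorem InitiallyCompact.exists_finite_subcover_of_subset {X : Type u} [TopologicalSpace X]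
    {κ : Cardinal.{u}} (hX : InitiallyCompact X κ) {ℳ 𝒢 : Set (Set X)}
    (hMopen : ∀ M ∈ ℳ, IsOpen M) (h𝒢 : 𝒢 ⊆ ℳ) (h𝒢cover : ⋃₀ 𝒢 = Set.univ) (h𝒢card : #𝒢 ≤ κ) :
    ∃ F ⊆ ℳ, F.Finite ∧ ⋃₀ F = Set.univ := by
  obtain ⟨F, hF𝒢, hFfin, hFcover⟩ := hX 𝒢 (fun U hU => hMopen U (h𝒢 hU)) h𝒢cover h𝒢card
  exact ⟨F, hF𝒢.trans h𝒢, hFfin, hFcover⟩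

/-- In an initially `κ`-compact space with a quasi-`G_κ`-diagonal sequence, if `ℳ` is a
maximal open cover without a finite subcover, then every `x` admits `α < κ` with
`x ∈ ⋃ 𝒪_α` and `st(x, 𝒪_α) ∈ ℳ`. -/
theorem exists_star_mem_maximal_cover {X : Type u} [TopologicalSpace X]
    (κ : Cardinal.{u}) (hκ : ℵ₀ ≤ κ) (hX : InitiallyCompact X κ)
    (𝒪 : κ.ord.ToType → Set (Set X)) (h𝒪 : IsQuasiGDiagonalSeq κ 𝒪)
    (ℳ : Set (Set X)) (hMopen : ∀ M ∈ ℳ, IsOpen M) (hMcover : ⋃₀ ℳ = Set.univ)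
    (hMnofin : ¬ ∃ F ⊆ ℳ, F.Finite ∧ ⋃₀ F = Set.univ)
    (hMmax : ∀ O : Set X, IsOpen O → O ∉ ℳ →
      ∃ F ⊆ insert O ℳ, F.Finite ∧ ⋃₀ F = Set.univ) :
    ∀ x : X, ∃ α, x ∈ ⋃₀ 𝒪 α ∧ SetStar {x} (𝒪 α) ∈ ℳ := by
  intro x
  by_contra! hx
  have hG : ∀ α, ∃ G ⊆ ℳ, G.Finite ∧ (x ∈ ⋃₀ 𝒪 α → (SetStar {x} (𝒪 α))ᶜ ⊆ ⋃₀ G) := by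
    intro α
    by_cases hxα : x ∈ ⋃₀ 𝒪 α
    · obtain ⟨F, hF, hFfin, hFcov⟩ :=
        hMmax _ (isOpen_setStar {x} (h𝒪.1 α)) (hx α hxα)
      obtain ⟨G, hGℳ, hGfin, hGcov⟩ :=
        exists_finite_subset_compl_subset_sUnion_of_subset_insert hF hFfin hFcov
      exact ⟨G, hGℳ, hGfin, fun _ => hGcov⟩
    · exact ⟨∅, empty_subset _, finite_empty, fun h => (hxα h).elim⟩
  choose G hGℳ hGfin hGcov using hG
  obtain ⟨M₀, hM₀, hxM₀⟩ : x ∈ ⋃₀ ℳ := hMcover ▸ mem_univ x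
  have hcover : ⋃₀ insert M₀ (⋃ α, G α) = Set.univ := by
    refine eq_univ_of_forall fun y => ?_
    rcases eq_or_ne y x with rfl | hyx
    · exact ⟨M₀, mem_insert _ _, hxM₀⟩
    obtain ⟨α, hxα, hyα⟩ := h𝒪.2 x y hyx.symm
    obtain ⟨M, hMG, hyM⟩ := hGcov α hxα hyα
    exact ⟨M, mem_insert_of_mem _ (mem_iUnion.2 ⟨α, hMG⟩), hyM⟩
  refine hMnofin (hX.exists_finite_subcover_of_subset hMopen ?_ hcover
    (mk_insert_iUnion_finite_le hκ (mk_ord_toType κ).le M₀ hGfin))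
  exact insert_subset hM₀ (iUnion_subset hGℳ)
end

section
/- Let κ be an infinite cardinal, let X be an initially κ-compact topological space, let {𝒪_α : α < κ} be a quasi-G_κ-diagonal sequence for X, and let ℳ be an open cover of X with no finite subcover that is maximal, i.e., for every open subset O of X with O ∉ ℳ the cover ℳ ∪ {O} has a finite subcover. Suppose α : X → κ satisfies, for every x ∈ X, that x ∈ ⋃𝒪_{α(x)} and st(x, 𝒪_{α(x)}) ∈ ℳ. Then for every β < κ the set Y_β = {x ∈ X : α(x) = β} is covered by finitely many members of ℳ. -/
open Set Cardinal

universe u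

/-!
Write `G = ⋃ 𝒪_β`, which contains `Y_β`. If `G ∈ ℳ` we are done; otherwise maximality gives a
finite `F ⊆ ℳ` with `G ∪ ⋃ F = X`. If no finite subfamily of `F ∪ {st(y, 𝒪_β) : y ∈ Y_β}`
covered `Y_β`, we could pick `x_n ∈ Y_β \ ⋃ F` outside `st(x_m, 𝒪_β)` for all `m < n`. Initial
`κ`-compactness makes `X` countably compact, so the sequence clusters at some `p`; `p ∉ ⋃ F`,
so `p` lies in some `O ∈ 𝒪_β`, which then contains two terms `x_m, x_n` with `m < n`, whence
`x_n ∈ st(x_m, 𝒪_β)`.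
-/

open Filter

theorem InitiallyCompact.countablyCompactSpace {X : Type u} [TopologicalSpace X]
    {κ : Cardinal.{u}} (hX : InitiallyCompact X κ) (hκ : ℵ₀ ≤ κ) : CountablyCompactSpace X := by
  rw [← isCountablyCompact_univ_iff, isCountablyCompact_iff_countable_open_cover']
  intro U hU hcover
  have := (countable_range U).to_subtype
  obtain ⟨F, hFU, hF, hFcover⟩ := hX (range U) (forall_mem_range.2 hU)
    (univ_subset_iff.1 (by rwa [sUnion_range])) (mk_le_aleph0.trans hκ)
  obtain ⟨t, -, ht, htcover⟩ :=
    (exists_subset_image_finite_and (p := fun s => ⋃₀ s = Set.univ)).1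
      ⟨F, image_univ ▸ hFU, hF, hFcover⟩
  exact ⟨t, ht, by rw [← sUnion_image, htcover]⟩

theorem subset_setStar_singleton {X : Type u} {𝒪 : Set (Set X)} {O : Set X} {x : X}
    (hO : O ∈ 𝒪) (hx : x ∈ O) : O ⊆ SetStar {x} 𝒪 :=
  subset_sUnion_of_mem ⟨hO, x, hx, rfl⟩

theorem exists_finset_subset_union_setStar {X : Type u} [TopologicalSpace X]
    [CountablyCompactSpace X] {𝒰 : Set (Set X)} (h𝒰 : ∀ U ∈ 𝒰, IsOpen U) {W : Set X}
    (hW : IsOpen W) (hcover : Wᶜ ⊆ ⋃₀ 𝒰) (Y : Set X) :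
    ∃ t : Finset X, ↑t ⊆ Y ∧ Y ⊆ W ∪ ⋃ y ∈ t, SetStar {y} 𝒰 := by
  by_contra! h
  obtain ⟨x, hxY, hsep⟩ := exists_seq_of_forall_finset_exists (· ∈ Y \ W)
    (fun y z => z ∉ SetStar {y} 𝒰) fun t ht => by
      obtain ⟨z, hzY, hz⟩ := not_subset.1 (h t fun y hy => (ht y hy).1)
      simp only [mem_union, mem_iUnion₂, not_or, not_exists] at hz
      exact ⟨z, ⟨hzY, hz.1⟩, hz.2⟩
  obtain ⟨p, -, hp⟩ := CountablyCompactSpace.isCountablyCompact_univ.seq_clusterPt x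
    (Eventually.of_forall fun _ => mem_univ _)
  have hpW : p ∉ W := fun hpW =>
    have ⟨n, hn⟩ := (mapClusterPt_iff_frequently.1 hp W (hW.mem_nhds hpW)).exists
    (hxY n).2 hn
  obtain ⟨O, hO, hpO⟩ := hcover hpW
  have hfreq := mapClusterPt_iff_frequently.1 hp O ((h𝒰 O hO).mem_nhds hpO)
  obtain ⟨i, hi⟩ := hfreq.exists
  obtain ⟨j, hij, hj⟩ := frequently_atTop.1 hfreq (i + 1)
  exact hsep i j hij (subset_setStar_singleton hO hi hj)

theorem exists_finite_subset_compl_sUnion_subset_of_insert {X : Type u} {ℳ : Set (Set X)}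
    {O : Set X} (h : ∃ F ⊆ insert O ℳ, F.Finite ∧ ⋃₀ F = Set.univ) :
    ∃ F ⊆ ℳ, F.Finite ∧ (⋃₀ F)ᶜ ⊆ O := by
  obtain ⟨F, hF, hFfin, hFcover⟩ := h
  refine ⟨F \ {O}, sdiff_singleton_subset_iff.2 hF, hFfin.sdiff, fun x hx => ?_⟩
  obtain ⟨U, hUF, hxU⟩ := hFcover.symm ▸ mem_univ x
  by_contra hxO
  exact hx ⟨U, ⟨hUF, fun hUO => hxO (hUO ▸ hxU)⟩, hxU⟩

theorem level_sets_finitely_covered_general {X : Type u} [TopologicalSpace X]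
    (κ : Cardinal.{u}) (hκ : ℵ₀ ≤ κ) (hX : InitiallyCompact X κ)
    (𝒪 : κ.ord.ToType → Set (Set X)) (h𝒪 : IsQuasiGDiagonalSeq κ 𝒪)
    (ℳ : Set (Set X)) (hMopen : ∀ M ∈ ℳ, IsOpen M)
    (hMmax : ∀ O : Set X, IsOpen O → O ∉ ℳ →
      ∃ F ⊆ insert O ℳ, F.Finite ∧ ⋃₀ F = Set.univ)
    (a : X → κ.ord.ToType)
    (ha : ∀ x : X, x ∈ ⋃₀ 𝒪 (a x) ∧ SetStar {x} (𝒪 (a x)) ∈ ℳ) :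
    ∀ β : κ.ord.ToType, ∃ F ⊆ ℳ, F.Finite ∧ {x : X | a x = β} ⊆ ⋃₀ F := by
  intro β
  by_cases hG : ⋃₀ 𝒪 β ∈ ℳ
  · exact ⟨{⋃₀ 𝒪 β}, singleton_subset_iff.2 hG, finite_singleton _,
      fun x hx => ⟨_, mem_singleton _, hx ▸ (ha x).1⟩⟩
  obtain ⟨F, hFℳ, hFfin, hFcover⟩ :=
    exists_finite_subset_compl_sUnion_subset_of_insert (hMmax _ (isOpen_sUnion (h𝒪.1 β)) hG)
  have := hX.countablyCompactSpace hκ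
  obtain ⟨t, htY, hYt⟩ := exists_finset_subset_union_setStar (h𝒪.1 β)
    (isOpen_sUnion fun M hM => hMopen M (hFℳ hM)) hFcover {x | a x = β}
  refine ⟨F ∪ (fun y => SetStar {y} (𝒪 β)) '' t, ?_, hFfin.union (t.finite_toSet.image _), ?_⟩
  · exact union_subset hFℳ (image_subset_iff.2 fun y hy => htY hy ▸ (ha y).2)
  · rwa [sUnion_union, sUnion_image]

/-- With `ℳ` a maximal open cover without a finite subcover of an initially `κ`-compact
space with a quasi-`G_κ`-diagonal sequence, and `a : X → κ` with `x ∈ ⋃ 𝒪_{a x}` and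
`st(x, 𝒪_{a x}) ∈ ℳ` for all `x`, every level set `Y_β = {x | a x = β}` is covered by
finitely many members of `ℳ`. -/
theorem level_sets_finitely_covered {X : Type u} [TopologicalSpace X]
    (κ : Cardinal.{u}) (hκ : ℵ₀ ≤ κ) (hX : InitiallyCompact X κ)
    (𝒪 : κ.ord.ToType → Set (Set X)) (h𝒪 : IsQuasiGDiagonalSeq κ 𝒪)
    (ℳ : Set (Set X)) (hMopen : ∀ M ∈ ℳ, IsOpen M) (hMcover : ⋃₀ ℳ = Set.univ)
    (hMnofin : ¬ ∃ F ⊆ ℳ, F.Finite ∧ ⋃₀ F = Set.univ)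
    (hMmax : ∀ O : Set X, IsOpen O → O ∉ ℳ →
      ∃ F ⊆ insert O ℳ, F.Finite ∧ ⋃₀ F = Set.univ)
    (a : X → κ.ord.ToType)
    (ha : ∀ x : X, x ∈ ⋃₀ 𝒪 (a x) ∧ SetStar {x} (𝒪 (a x)) ∈ ℳ) :
    ∀ β : κ.ord.ToType, ∃ F ⊆ ℳ, F.Finite ∧ {x : X | a x = β} ⊆ ⋃₀ F :=
  level_sets_finitely_covered_general κ hκ hX 𝒪 h𝒪 ℳ hMopen hMmax a ha
end

section
/- Let X be a countably compact topological space, let 𝒪 be a family of open subsets of X, and let C be a closed subset of X with C ⊆ ⋃𝒪. If D ⊆ C is a set such that for all distinct x, y ∈ D one has y ∉ st(x, 𝒪), then D is finite. -/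
open Set Cardinal

universe u

/-!
If `D` were infinite, countable compactness of the closed set `C` would give a point `a ∈ C`
every neighbourhood of which meets `D` in infinitely many points: a cluster point of an
injective sequence in `D` (without `T₁`, an accumulation point of `D` would not suffice).
Some `O ∈ 𝒪` contains `a`, yet the star condition lets each member of `𝒪` contain at most
one point of `D`.
-/

open Filter Topology

theorem countablyCompactSpace_of_countable_open_cover {X : Type*} [TopologicalSpace X]
    (hcc : ∀ 𝒞 : Set (Set X), 𝒞.Countable → (∀ U ∈ 𝒞, IsOpen U) → ⋃₀ 𝒞 = Set.univ →
      ∃ F ⊆ 𝒞, F.Finite ∧ ⋃₀ F = Set.univ) :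
    CountablyCompactSpace X := by
  refine ⟨isCountablyCompact_iff_countable_open_cover'.2 fun U hUo hU => ?_⟩
  obtain ⟨F, hFU, hF, hFcover⟩ := hcc (range U) (countable_range U) (forall_mem_range.2 hUo)
    (by rwa [sUnion_range, ← univ_subset_iff])
  rw [← image_univ] at hFU
  obtain ⟨t, -, ht, htcover⟩ :=
    exists_subset_image_finite_and (p := fun F => ⋃₀ F = Set.univ) |>.1 ⟨F, hFU, hF, hFcover⟩
  exact ⟨t, ht, by rw [← sUnion_image, htcover]⟩

theorem IsCountablyCompact.exists_forall_nhds_inter_infinite {X : Type*} [TopologicalSpace X]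
    {A B : Set X} (hA : IsCountablyCompact A) (hBA : B ⊆ A) (hB : B.Infinite) :
    ∃ a ∈ A, ∀ U ∈ 𝓝 a, (U ∩ B).Infinite := by
  let e := hB.natEmbedding
  let x : ℕ → X := (↑) ∘ e
  have hx : Function.Injective x := Subtype.val_injective.comp e.injective
  obtain ⟨a, haA, hax⟩ := hA.seq_clusterPt x (.of_forall fun n => hBA (e n).2)
  refine ⟨a, haA, fun U hU => ?_⟩
  have hinf : {n | x n ∈ U}.Infinite :=
    Nat.frequently_atTop_iff_infinite.1 (mapClusterPt_iff_frequently.1 hax U hU)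
  have hsub : x '' {n | x n ∈ U} ⊆ U ∩ B := image_subset_iff.2 fun n hn => ⟨hn, (e n).2⟩
  exact (hinf.image hx.injOn).mono hsub

theorem mem_setStar_singleton {X : Type u} {𝒪 : Set (Set X)} {x y : X} :
    y ∈ SetStar {x} 𝒪 ↔ ∃ O ∈ 𝒪, x ∈ O ∧ y ∈ O := by
  simp [SetStar, and_assoc]

theorem subsingleton_inter_of_forall_notMem_setStar {X : Type u} {𝒪 : Set (Set X)} {D O : Set X}
    (hD : ∀ x ∈ D, ∀ y ∈ D, x ≠ y → y ∉ SetStar {x} 𝒪) (hO : O ∈ 𝒪) :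
    (O ∩ D).Subsingleton := fun x hx y hy => by
  by_contra hxy
  exact hD x hx.2 y hy.2 hxy (mem_setStar_singleton.2 ⟨O, hO, hx.1, hy.1⟩)

/-- In a countably compact space, if `C` is a closed set covered by a family `𝒪` of open
sets, then any `D ⊆ C` whose distinct points `x, y` satisfy `y ∉ st(x, 𝒪)` is finite. -/
theorem finite_of_star_discrete {X : Type u} [TopologicalSpace X]
    (hcc : ∀ 𝒞 : Set (Set X), 𝒞.Countable → (∀ U ∈ 𝒞, IsOpen U) → ⋃₀ 𝒞 = Set.univ →
      ∃ F ⊆ 𝒞, F.Finite ∧ ⋃₀ F = Set.univ)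
    (𝒪 : Set (Set X)) (h𝒪 : ∀ O ∈ 𝒪, IsOpen O)
    (C : Set X) (hCclosed : IsClosed C) (hCsub : C ⊆ ⋃₀ 𝒪)
    (D : Set X) (hDC : D ⊆ C)
    (hD : ∀ x ∈ D, ∀ y ∈ D, x ≠ y → y ∉ SetStar {x} 𝒪) :
    D.Finite := by
  have := countablyCompactSpace_of_countable_open_cover hcc
  by_contra hDinf
  obtain ⟨a, haC, ha⟩ := hCclosed.isCountablyCompact.exists_forall_nhds_inter_infinite hDC hDinf
  obtain ⟨O, hO, haO⟩ := hCsub haC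
  exact ha O ((h𝒪 O hO).mem_nhds haO) (subsingleton_inter_of_forall_notMem_setStar hD hO).finite
end
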